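/- Let P = U⁻¹ P_SM V⁻¹, C = V C_SM U with U, V invertible, and suppose I + C P and I + C_SM P_SM are invertible. Then the input control sensitivity satisfies (I + C P)⁻¹ C = V ((I + C_SM P_SM)⁻¹ C_SM) U. -/

import Mathlib

namespace Matrix

variable {n R : Type*} [Fintype n] [DecidableEq n] [CommRing R]

theorem inv_conj {V : Matrix n n R} (hV : IsUnit V.det) (A : Matrix n n R) :
    (V * A * V⁻¹)⁻¹ = V * A⁻¹ * V⁻¹ := by
  rw [mul_inv_rev, mul_inv_rev, nonsing_inv_nonsing_inv _ hV, Matrix.mul_assoc]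

theorem one_add_conj {V : Matrix n n R} (hV : IsUnit V.det) (A : Matrix n n R) :
    1 + V * A * V⁻¹ = V * (1 + A) * V⁻¹ := by
  rw [Matrix.mul_add, Matrix.add_mul, Matrix.mul_one, mul_nonsing_inv _ hV]

theorem mul_eq_conj_mul {U : Matrix n n R} (hU : IsUnit U.det) (V c p : Matrix n n R) :
    V * c * U * (U⁻¹ * p * V⁻¹) = V * (c * p) * V⁻¹ := by
  simp only [Matrix.mul_assoc, mul_nonsing_inv_cancel_left _ _ hU]

end Matrix

theorem input_control_sensitivity_transformation_general {n : ℕ} {K : Type*} [Field K]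
    (P C PSM CSM U V : Matrix (Fin n) (Fin n) K)
    (hU : IsUnit U.det) (hV : IsUnit V.det)
    (hP : P = U⁻¹ * PSM * V⁻¹) (hC : C = V * CSM * U) :
    (1 + C * P)⁻¹ * C = V * ((1 + CSM * PSM)⁻¹ * CSM) * U := by
  subst hP hC
  rw [Matrix.mul_eq_conj_mul hU, Matrix.one_add_conj hV, Matrix.inv_conj hV]
  simp only [Matrix.mul_assoc, Matrix.nonsing_inv_mul_cancel_left _ _ hV]

/-- Input control sensitivity transformation: `S_CI = V S_CI^SM U`. -/
theorem input_control_sensitivity_transformation {n : ℕ} {K : Type*} [Field K]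
    (P C PSM CSM U V : Matrix (Fin n) (Fin n) K)
    (hU : IsUnit U.det) (hV : IsUnit V.det)
    (hP : P = U⁻¹ * PSM * V⁻¹) (hC : C = V * CSM * U)
    (h1 : IsUnit (1 + C * P).det) (h2 : IsUnit (1 + CSM * PSM).det) :
    (1 + C * P)⁻¹ * C = V * ((1 + CSM * PSM)⁻¹ * CSM) * U :=
  input_control_sensitivity_transformation_general P C PSM CSM U V hU hV hP hC
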